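/- arXiv:1809.08947 — 2 statements merged into one kernel-verified Lean document; each statement's English description precedes it below -/
import Mathlib

section
/- Let ℓ, R₀, R₁ > 0 and set α₀ := ℓ/R₀ + 1, α₁ := ℓ/R₁ + 1, γ := (α₀α₁ − 1)/ℓ, and for {i,j} = {0,1} let M_i := −[[α_i, ℓ],[γ, α_j]]. Then the product M₁M₀ has determinant 1 and trace 4α₀α₁ − 2 > 2; consequently it has two real eigenvalues λ and λ⁻¹ with 0 < λ < 1, and this smaller eigenvalue satisfies 4λα₀α₁ = (1+λ)², i.e., writing L := 2ℓ, it satisfies 4λ(L/(2R₀)+1)(L/(2R₁)+1) = (1+λ)². -/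
private lemma mulVec_two (a b c d x y : ℝ) :
    (!![a, b; c, d]).mulVec ![x, y] = ![a * x + b * y, c * x + d * y] := by
  funext i
  fin_cases i <;> simp [Matrix.mulVec, dotProduct, Fin.sum_univ_two]

private lemma smul_two (r x y : ℝ) : r • (![x, y] : Fin 2 → ℝ) = ![r * x, r * y] := by
  funext i; fin_cases i <;> simp

/-!
For a period-two billiard orbit of total length `L = 2ℓ` between two strictly convex
obstacles, with radii of curvature `R₀, R₁` at the two (perpendicular) bounce points,
the matrices `Mᵢ = -[[ℓ/Rᵢ+1, ℓ],[ℓ/(RᵢRⱼ)+1/Rᵢ+1/Rⱼ, ℓ/Rⱼ+1]]` are the differentials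
of the billiard map at the two bounces.  The product `M₁M₀` has determinant `1` and
trace `4α₀α₁ - 2 > 2`; consequently it has two real eigenvalues `λ` and `λ⁻¹` with
`0 < λ < 1`, and this smaller eigenvalue satisfies `4λα₀α₁ = (1+λ)²`, i.e., writing
`L := 2ℓ`, it satisfies `4λ(L/(2R₀)+1)(L/(2R₁)+1) = (1+λ)²`.
-/
theorem statement_1 (ℓ R₀ R₁ : ℝ) (hℓ : 0 < ℓ) (hR₀ : 0 < R₀) (hR₁ : 0 < R₁) :
    let α₀ : ℝ := ℓ / R₀ + 1
    let α₁ : ℝ := ℓ / R₁ + 1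
    let γ : ℝ := (α₀ * α₁ - 1) / ℓ
    let M₀ : Matrix (Fin 2) (Fin 2) ℝ := -!![α₀, ℓ; γ, α₁]
    let M₁ : Matrix (Fin 2) (Fin 2) ℝ := -!![α₁, ℓ; γ, α₀]
    (M₁ * M₀).det = 1 ∧
    (M₁ * M₀).trace = 4 * α₀ * α₁ - 2 ∧
    2 < (M₁ * M₀).trace ∧
    ∃ lam : ℝ, 0 < lam ∧ lam < 1 ∧
      (∃ v : Fin 2 → ℝ, v ≠ 0 ∧ (M₁ * M₀).mulVec v = lam • v) ∧
      (∃ u : Fin 2 → ℝ, u ≠ 0 ∧ (M₁ * M₀).mulVec u = lam⁻¹ • u) ∧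
      4 * lam * α₀ * α₁ = (1 + lam) ^ 2 ∧
      4 * lam * ((2 * ℓ) / (2 * R₀) + 1) * ((2 * ℓ) / (2 * R₁) + 1) = (1 + lam) ^ 2 := by
  intro α₀ α₁ γ M₀ M₁
  have hα₀ : 1 < α₀ := by simp only [α₀]; nlinarith [div_pos hℓ hR₀]
  have hα₁ : 1 < α₁ := by simp only [α₁]; nlinarith [div_pos hℓ hR₁]
  have hp : 1 < α₀ * α₁ := by nlinarith
  have hγℓ : ℓ * γ = α₀ * α₁ - 1 := by
    simp only [γ]; field_simp
  have hγ : 0 < γ := by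
    have := hγℓ; nlinarith
  -- the product matrix
  set a : ℝ := 2 * (α₀ * α₁) - 1 with ha
  set b : ℝ := 2 * (ℓ * α₁) with hb
  set c : ℝ := 2 * (γ * α₀) with hc
  have e00 : α₁ * α₀ + ℓ * γ = a := by rw [ha]; linear_combination hγℓ
  have e01 : α₁ * ℓ + ℓ * α₁ = b := by rw [hb]; ring
  have e10 : γ * α₀ + α₀ * γ = c := by rw [hc]; ring
  have e11 : γ * ℓ + α₀ * α₁ = a := by rw [ha]; linear_combination hγℓ
  have hprod : M₁ * M₀ = !![a, b; c, a] := by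
    show (-!![α₁, ℓ; γ, α₀]) * (-!![α₀, ℓ; γ, α₁]) = _
    rw [neg_mul_neg, Matrix.mul_fin_two, e00, e01, e10, e11]
  have hbpos : 0 < b := by positivity
  have hcpos : 0 < c := by positivity
  have hapos : 1 < a := by nlinarith
  have hbc : b * c = a ^ 2 - 1 := by
    have h4 : b * c = 4 * ((ℓ * γ) * (α₀ * α₁)) := by rw [hb, hc]; ring
    rw [h4, hγℓ, ha]; ring
  set s : ℝ := Real.sqrt (b * c) with hsdef
  have hs2 : s ^ 2 = a ^ 2 - 1 := by
    rw [hsdef, Real.sq_sqrt (by positivity)]; exact hbc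
  have hspos : 0 < s := Real.sqrt_pos.2 (by positivity)
  have hsa : s < a := by nlinarith
  set sb : ℝ := Real.sqrt b with hsb
  set sc : ℝ := Real.sqrt c with hsc
  have hsbpos : 0 < sb := Real.sqrt_pos.2 hbpos
  have hscpos : 0 < sc := Real.sqrt_pos.2 hcpos
  have hbe : b = sb ^ 2 := (Real.sq_sqrt hbpos.le).symm
  have hce : c = sc ^ 2 := (Real.sq_sqrt hcpos.le).symm
  have hse : s = sb * sc := Real.sqrt_mul hbpos.le c
  have hkey : 4 * (a - s) * α₀ * α₁ = (1 + (a - s)) ^ 2 := by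
    have hs2' : s ^ 2 = (2 * (α₀ * α₁) - 1) ^ 2 - 1 := by rw [hs2, ha]
    rw [ha]
    linear_combination - hs2'
  refine ⟨?_, ?_, ?_, ?_⟩
  · rw [hprod, Matrix.det_fin_two_of]
    linear_combination - hbc
  · rw [hprod, Matrix.trace_fin_two_of, ha]; ring
  · rw [hprod, Matrix.trace_fin_two_of]; nlinarith
  · refine ⟨a - s, sub_pos.2 hsa, ?_, ?_, ?_, hkey, ?_⟩
    · -- lam < 1 : (a-s)(a+s) = 1 with a+s > 1
      have h1 : (a - s) * (a + s) = 1 := by linear_combination - hs2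
      nlinarith
    · refine ⟨![sb, -sc], ?_, ?_⟩
      · intro h
        have h0 := congrFun h 0
        simp at h0
        exact absurd h0 (by positivity)
      · rw [hprod, mulVec_two, smul_two]
        have hx : a * sb + b * -sc = (a - s) * sb := by rw [hbe, hse]; ring
        have hy : c * sb + a * -sc = (a - s) * -sc := by rw [hce, hse]; ring
        rw [hx, hy]
    · have hinv : (a - s)⁻¹ = a + s := by
        have h1 : (a + s) * (a - s) = 1 := by linear_combination - hs2
        exact (eq_inv_of_mul_eq_one_left h1).symm
      refine ⟨![sb, sc], ?_, ?_⟩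
      · intro h
        have h0 := congrFun h 0
        simp at h0
        exact absurd h0 (by positivity)
      · rw [hprod, hinv, mulVec_two, smul_two]
        have hx : a * sb + b * sc = (a + s) * sb := by rw [hbe, hse]; ring
        have hy : c * sb + a * sc = (a + s) * sc := by rw [hce, hse]; ring
        rw [hx, hy]
    · have e0 : (2 * ℓ) / (2 * R₀) = ℓ / R₀ := by
        rw [mul_div_mul_left _ _ (two_ne_zero)]
      have e1 : (2 * ℓ) / (2 * R₁) = ℓ / R₁ := by
        rw [mul_div_mul_left _ _ (two_ne_zero)]
      rw [e0, e1]
      exact hkey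
end

section
/- Let ℓ, R₁, R₂ > 0, α₁ := ℓ/R₁ + 1, α₂ := ℓ/R₂ + 1, γ := (α₁α₂ − 1)/ℓ, and let λ ∈ (0,1) satisfy λ + λ⁻¹ = 4α₁α₂ − 2. Consider the matrices M := [[2α₁α₂−1, 2α₂ℓ],[2α₁γ, 2α₁α₂−1]] and N := [[2α₁α₂−1, 2α₁ℓ],[2α₂γ, 2α₁α₂−1]] (the differentials of the square of the billiard map at the two bounces of a period-two orbit), and the matrix D₁ := −[[α₁, ℓ],[γ, α₂]]. Then: (i) every eigenvector (C₁ₛˢ, C₁φˢ) of M with eigenvalue λ has C₁φˢ ≠ 0 and C₁ₛˢ/C₁φˢ = −4α₂λℓ/(1−λ²) < 0, and every eigenvector (C₁ₛᵘ, C₁φᵘ) of M with eigenvalue λ⁻¹ has C₁ₛᵘ/C₁φᵘ = 4α₂λℓ/(1−λ²) > 0; (ii) every λ-eigenvector of N has coordinate ratio −4α₁λℓ/(1−λ²) and every λ⁻¹-eigenvector of N has ratio 4α₁λℓ/(1−λ²); (iii) writing (C₂ₛˢ, C₂φˢ) := D₁·(C₁ₛˢ, C₁φˢ) and (C₂ₛᵘ,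 C₂φᵘ) := D₁·(C₁ₛᵘ, C₁φᵘ), one has C₂ₛˢ/C₁φˢ = 2λℓ/(1−λ) > 0 and C₂ₛᵘ/C₁φᵘ = −2ℓ/(1−λ) < 0. -/
/-!
Only the first row of the eigenvalue equation is needed: for `A = !![d, b; c, d]` and
`A v = t v` with `t ≠ d` it gives `v₀ / v₁ = b / (t - d)`. Since the diagonal is half the trace,
`2d = λ + λ⁻¹`, hence `λ - d = -(1 - λ²) / (2λ)` and `λ⁻¹ - d = (1 - λ²) / (2λ)`, which yields
the ratios for `M` and `N`. For the images under `D₁` the first coordinate divided by `v₁` is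
`-(α₁ v₀ / v₁ + ℓ)`, and the trace relation in the form `4 α₁ α₂ λ = (1 + λ)²` collapses it.
-/

open Matrix

lemma Matrix.fin_two_ratio_of_mulVec_eq_smul {A : Matrix (Fin 2) (Fin 2) ℝ} {t : ℝ}
    {v : Fin 2 → ℝ} (hv : v ≠ 0) (h : A *ᵥ v = t • v) (ht : A 0 0 ≠ t) :
    v 1 ≠ 0 ∧ v 0 / v 1 = A 0 1 / (t - A 0 0) := by
  have hrow : A 0 0 * v 0 + A 0 1 * v 1 = t * v 0 := by
    simpa [mulVec, dotProduct, Fin.sum_univ_two] using congrFun h 0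
  have htA : t - A 0 0 ≠ 0 := sub_ne_zero.mpr ht.symm
  have hv1 : v 1 ≠ 0 := by
    intro hv1
    have hv0 : v 0 = 0 := by
      have : (t - A 0 0) * v 0 = 0 := by rw [hv1] at hrow; linear_combination hrow.symm
      exact (mul_eq_zero.mp this).resolve_left htA
    exact hv (funext fun i => by fin_cases i <;> simp [hv0, hv1])
  refine ⟨hv1, ?_⟩
  rw [div_eq_div_iff hv1 htA]
  linear_combination -hrow

section AddInvEq

variable {lam d : ℝ}

lemma sub_eq_of_add_inv_eq_two_mul (hlam : lam ≠ 0) (h : lam + lam⁻¹ = 2 * d) :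
    lam - d = -(1 - lam ^ 2) / (2 * lam) := by
  field_simp
  field_simp at h
  linear_combination h

lemma inv_sub_eq_of_add_inv_eq_two_mul (hlam : lam ≠ 0) (h : lam + lam⁻¹ = 2 * d) :
    lam⁻¹ - d = (1 - lam ^ 2) / (2 * lam) := by
  field_simp
  field_simp at h
  linear_combination h

variable {A : Matrix (Fin 2) (Fin 2) ℝ} {v : Fin 2 → ℝ}

lemma stable_eigenvector_ratio (hlam : lam ≠ 0) (hlam_sq : lam ^ 2 ≠ 1)
    (htr : lam + lam⁻¹ = 2 * A 0 0) (hv : v ≠ 0) (h : A *ᵥ v = lam • v) :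
    v 1 ≠ 0 ∧ v 0 / v 1 = -(2 * lam * A 0 1) / (1 - lam ^ 2) := by
  have hne : A 0 0 ≠ lam := by
    intro he
    apply hlam_sq
    rw [he] at htr
    field_simp at htr
    linear_combination -htr
  obtain ⟨hv1, hr⟩ := fin_two_ratio_of_mulVec_eq_smul hv h hne
  refine ⟨hv1, ?_⟩
  rw [hr, sub_eq_of_add_inv_eq_two_mul hlam htr]
  field_simp

lemma unstable_eigenvector_ratio (hlam : lam ≠ 0) (hlam_sq : lam ^ 2 ≠ 1)
    (htr : lam + lam⁻¹ = 2 * A 0 0) (hv : v ≠ 0) (h : A *ᵥ v = lam⁻¹ • v) :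
    v 1 ≠ 0 ∧ v 0 / v 1 = 2 * lam * A 0 1 / (1 - lam ^ 2) := by
  have hne : A 0 0 ≠ lam⁻¹ := by
    intro he
    apply hlam_sq
    rw [he] at htr
    field_simp at htr
    linear_combination htr
  obtain ⟨hv1, hr⟩ := fin_two_ratio_of_mulVec_eq_smul hv h hne
  refine ⟨hv1, ?_⟩
  rw [hr, inv_sub_eq_of_add_inv_eq_two_mul hlam htr]
  field_simp

end AddInvEq

lemma neg_fin_two_mulVec_zero_div {a b c d : ℝ} {v : Fin 2 → ℝ} (hv1 : v 1 ≠ 0) :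
    (-!![a, b; c, d] *ᵥ v) 0 / v 1 = -(a * (v 0 / v 1) + b) := by
  simp only [mulVec, dotProduct, Matrix.neg_apply, of_apply, cons_val', cons_val_fin_one,
    cons_val_zero, cons_val_one, Fin.sum_univ_two]
  field_simp
  ring

section Billiard

variable {lam ℓ α α' : ℝ}

lemma eigenvector_ratios {c d : ℝ} (hlam₀ : 0 < lam) (hlam₁ : lam < 1) (hα : 0 < α)
    (hℓ : 0 < ℓ) (htr : lam + lam⁻¹ = 2 * d) :
    (∀ v : Fin 2 → ℝ, v ≠ 0 → !![d, 2 * α * ℓ; c, d] *ᵥ v = lam • v →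
      v 1 ≠ 0 ∧ v 0 / v 1 = -(4 * α * lam * ℓ) / (1 - lam ^ 2) ∧ v 0 / v 1 < 0) ∧
    (∀ v : Fin 2 → ℝ, v ≠ 0 → !![d, 2 * α * ℓ; c, d] *ᵥ v = lam⁻¹ • v →
      v 1 ≠ 0 ∧ v 0 / v 1 = 4 * α * lam * ℓ / (1 - lam ^ 2) ∧ 0 < v 0 / v 1) := by
  have hsq : 0 < 1 - lam ^ 2 := by nlinarith
  have hlam_sq : lam ^ 2 ≠ 1 := by linarith
  have hA : !![d, 2 * α * ℓ; c, d] 0 1 = 2 * α * ℓ := rfl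
  constructor
  · intro v hv h
    obtain ⟨hv1, hr⟩ := stable_eigenvector_ratio hlam₀.ne' hlam_sq htr hv h
    have hr' : v 0 / v 1 = -(4 * α * lam * ℓ) / (1 - lam ^ 2) := by rw [hr, hA]; ring
    exact ⟨hv1, hr', hr' ▸ div_neg_of_neg_of_pos (by nlinarith [mul_pos hα hlam₀]) hsq⟩
  · intro v hv h
    obtain ⟨hv1, hr⟩ := unstable_eigenvector_ratio hlam₀.ne' hlam_sq htr hv h
    have hr' : v 0 / v 1 = 4 * α * lam * ℓ / (1 - lam ^ 2) := by rw [hr, hA]; ring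
    exact ⟨hv1, hr', hr' ▸ by positivity⟩

lemma stable_image_ratio (hlam_sq : lam ^ 2 ≠ 1)
    (hkey : 4 * α' * α * lam = (1 + lam) ^ 2) :
    -(α' * (-(4 * α * lam * ℓ) / (1 - lam ^ 2)) + ℓ) = 2 * lam * ℓ / (1 - lam) := by
  have h1 : 1 - lam ≠ 0 := fun h => hlam_sq (by rw [← sub_eq_zero.1 h]; ring)
  have h2 : 1 - lam ^ 2 ≠ 0 := sub_ne_zero.mpr (Ne.symm hlam_sq)
  field_simp
  linear_combination (ℓ * (1 - lam)) * hkey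

lemma unstable_image_ratio (hlam_sq : lam ^ 2 ≠ 1)
    (hkey : 4 * α' * α * lam = (1 + lam) ^ 2) :
    -(α' * (4 * α * lam * ℓ / (1 - lam ^ 2)) + ℓ) = -(2 * ℓ) / (1 - lam) := by
  have h1 : 1 - lam ≠ 0 := fun h => hlam_sq (by rw [← sub_eq_zero.1 h]; ring)
  have h2 : 1 - lam ^ 2 ≠ 0 := sub_ne_zero.mpr (Ne.symm hlam_sq)
  field_simp
  linear_combination (-(ℓ * (1 - lam))) * hkey

end Billiard

theorem statement_14_general (ℓ R₁ R₂ lam : ℝ) (hℓ : 0 < ℓ) (hR₁ : 0 < R₁) (hR₂ : 0 < R₂)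
    (hlam₀ : 0 < lam) (hlam₁ : lam < 1)
    (α₁ α₂ γ : ℝ) (hα₁ : α₁ = ℓ / R₁ + 1) (hα₂ : α₂ = ℓ / R₂ + 1)
    (htrace : lam + lam⁻¹ = 4 * α₁ * α₂ - 2) :
    let M : Matrix (Fin 2) (Fin 2) ℝ :=
      !![2 * α₁ * α₂ - 1, 2 * α₂ * ℓ; 2 * α₁ * γ, 2 * α₁ * α₂ - 1]
    let N : Matrix (Fin 2) (Fin 2) ℝ :=
      !![2 * α₁ * α₂ - 1, 2 * α₁ * ℓ; 2 * α₂ * γ, 2 * α₁ * α₂ - 1]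
    let D₁ : Matrix (Fin 2) (Fin 2) ℝ := -!![α₁, ℓ; γ, α₂]
    -- (i) stable and unstable eigenvectors of `M`
    (∀ v : Fin 2 → ℝ, v ≠ 0 → M.mulVec v = lam • v →
      v 1 ≠ 0 ∧ v 0 / v 1 = -(4 * α₂ * lam * ℓ) / (1 - lam ^ 2) ∧ v 0 / v 1 < 0) ∧
    (∀ v : Fin 2 → ℝ, v ≠ 0 → M.mulVec v = lam⁻¹ • v →
      v 1 ≠ 0 ∧ v 0 / v 1 = 4 * α₂ * lam * ℓ / (1 - lam ^ 2) ∧ 0 < v 0 / v 1) ∧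
    -- (ii) stable and unstable eigenvectors of `N`
    (∀ v : Fin 2 → ℝ, v ≠ 0 → N.mulVec v = lam • v →
      v 1 ≠ 0 ∧ v 0 / v 1 = -(4 * α₁ * lam * ℓ) / (1 - lam ^ 2) ∧ v 0 / v 1 < 0) ∧
    (∀ v : Fin 2 → ℝ, v ≠ 0 → N.mulVec v = lam⁻¹ • v →
      v 1 ≠ 0 ∧ v 0 / v 1 = 4 * α₁ * lam * ℓ / (1 - lam ^ 2) ∧ 0 < v 0 / v 1) ∧
    -- (iii) the images under `D₁`
    (∀ v : Fin 2 → ℝ, v ≠ 0 → M.mulVec v = lam • v →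
      (D₁.mulVec v) 0 / v 1 = 2 * lam * ℓ / (1 - lam) ∧ 0 < (D₁.mulVec v) 0 / v 1) ∧
    (∀ u : Fin 2 → ℝ, u ≠ 0 → M.mulVec u = lam⁻¹ • u →
      (D₁.mulVec u) 0 / u 1 = -(2 * ℓ) / (1 - lam) ∧ (D₁.mulVec u) 0 / u 1 < 0) := by
  intro M N D₁
  have hα₁_pos : 0 < α₁ := hα₁ ▸ by positivity
  have hα₂_pos : 0 < α₂ := hα₂ ▸ by positivity
  have htr : lam + lam⁻¹ = 2 * (2 * α₁ * α₂ - 1) := by linarith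
  have hkey : 4 * α₁ * α₂ * lam = (1 + lam) ^ 2 := by
    field_simp at htrace
    linear_combination -htrace
  obtain ⟨hMs, hMu⟩ := eigenvector_ratios (c := 2 * α₁ * γ) hlam₀ hlam₁ hα₂_pos hℓ htr
  obtain ⟨hNs, hNu⟩ := eigenvector_ratios (c := 2 * α₂ * γ) hlam₀ hlam₁ hα₁_pos hℓ htr
  have h1 : 0 < 1 - lam := sub_pos.2 hlam₁
  have hlam_sq : lam ^ 2 ≠ 1 := by nlinarith
  refine ⟨hMs, hMu, hNs, hNu, fun v hv h => ?_, fun u hu h => ?_⟩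
  · obtain ⟨hv1, hr, -⟩ := hMs v hv h
    rw [neg_fin_two_mulVec_zero_div hv1, hr, stable_image_ratio hlam_sq hkey]
    exact ⟨rfl, by positivity⟩
  · obtain ⟨hu1, hr, -⟩ := hMu u hu h
    rw [neg_fin_two_mulVec_zero_div hu1, hr, unstable_image_ratio hlam_sq hkey]
    exact ⟨rfl, div_neg_of_neg_of_pos (by linarith) h1⟩

theorem statement_14 (ℓ R₁ R₂ lam : ℝ) (hℓ : 0 < ℓ) (hR₁ : 0 < R₁) (hR₂ : 0 < R₂)
    (hlam₀ : 0 < lam) (hlam₁ : lam < 1)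
    (α₁ α₂ γ : ℝ) (hα₁ : α₁ = ℓ / R₁ + 1) (hα₂ : α₂ = ℓ / R₂ + 1)
    (hγ : γ = (α₁ * α₂ - 1) / ℓ)
    (htrace : lam + lam⁻¹ = 4 * α₁ * α₂ - 2) :
    let M : Matrix (Fin 2) (Fin 2) ℝ :=
      !![2 * α₁ * α₂ - 1, 2 * α₂ * ℓ; 2 * α₁ * γ, 2 * α₁ * α₂ - 1]
    let N : Matrix (Fin 2) (Fin 2) ℝ :=
      !![2 * α₁ * α₂ - 1, 2 * α₁ * ℓ; 2 * α₂ * γ, 2 * α₁ * α₂ - 1]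
    let D₁ : Matrix (Fin 2) (Fin 2) ℝ := -!![α₁, ℓ; γ, α₂]
    -- (i) stable and unstable eigenvectors of `M`
    (∀ v : Fin 2 → ℝ, v ≠ 0 → M.mulVec v = lam • v →
      v 1 ≠ 0 ∧ v 0 / v 1 = -(4 * α₂ * lam * ℓ) / (1 - lam ^ 2) ∧ v 0 / v 1 < 0) ∧
    (∀ v : Fin 2 → ℝ, v ≠ 0 → M.mulVec v = lam⁻¹ • v →
      v 1 ≠ 0 ∧ v 0 / v 1 = 4 * α₂ * lam * ℓ / (1 - lam ^ 2) ∧ 0 < v 0 / v 1) ∧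
    -- (ii) stable and unstable eigenvectors of `N`
    (∀ v : Fin 2 → ℝ, v ≠ 0 → N.mulVec v = lam • v →
      v 1 ≠ 0 ∧ v 0 / v 1 = -(4 * α₁ * lam * ℓ) / (1 - lam ^ 2) ∧ v 0 / v 1 < 0) ∧
    (∀ v : Fin 2 → ℝ, v ≠ 0 → N.mulVec v = lam⁻¹ • v →
      v 1 ≠ 0 ∧ v 0 / v 1 = 4 * α₁ * lam * ℓ / (1 - lam ^ 2) ∧ 0 < v 0 / v 1) ∧
    -- (iii) the images under `D₁`
    (∀ v : Fin 2 → ℝ, v ≠ 0 → M.mulVec v = lam • v →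
      (D₁.mulVec v) 0 / v 1 = 2 * lam * ℓ / (1 - lam) ∧ 0 < (D₁.mulVec v) 0 / v 1) ∧
    (∀ u : Fin 2 → ℝ, u ≠ 0 → M.mulVec u = lam⁻¹ • u →
      (D₁.mulVec u) 0 / u 1 = -(2 * ℓ) / (1 - lam) ∧ (D₁.mulVec u) 0 / u 1 < 0) :=
  statement_14_general ℓ R₁ R₂ lam hℓ hR₁ hR₂ hlam₀ hlam₁ α₁ α₂ γ hα₁ hα₂ htrace
end
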